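/- For z₁, z₂ ∈ [0,1], the polarization step strictly increases the spread: (z₁ + z₂ − z₁z₂) − z₁z₂ ≥ |z₁ − z₂|, with equality if and only if z₁ ∈ {0,1} or z₂ ∈ {0,1}. -/
import Mathlib

/-- For `z₁, z₂ ∈ [0,1]`, polarization increases the spread:
`(z₁ + z₂ - z₁z₂) - z₁z₂ ≥ |z₁ - z₂|`, with equality iff `z₁ ∈ {0,1}` or `z₂ ∈ {0,1}`. -/
theorem polarization_increases_spread (z₁ z₂ : ℝ) (h₁ : z₁ ∈ Set.Icc (0:ℝ) 1)
    (h₂ : z₂ ∈ Set.Icc (0:ℝ) 1) :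
    |z₁ - z₂| ≤ (z₁ + z₂ - z₁ * z₂) - z₁ * z₂ ∧
      ((z₁ + z₂ - z₁ * z₂) - z₁ * z₂ = |z₁ - z₂| ↔
        (z₁ = 0 ∨ z₁ = 1) ∨ (z₂ = 0 ∨ z₂ = 1)) := by
  obtain ⟨ha, hb⟩ := h₁
  obtain ⟨hc, hd⟩ := h₂
  constructor
  · rcases abs_cases (z₁ - z₂) with ⟨h, _⟩ | ⟨h, _⟩ <;> rw [h] <;> nlinarith
  constructor
  · intro h
    rcases abs_cases (z₁ - z₂) with ⟨he, _⟩ | ⟨he, _⟩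
    · rw [he] at h
      have : z₂ * (1 - z₁) = 0 := by nlinarith
      rcases mul_eq_zero.mp this with h' | h'
      · right; left; exact h'
      · left; right; linarith
    · rw [he] at h
      have : z₁ * (1 - z₂) = 0 := by nlinarith
      rcases mul_eq_zero.mp this with h' | h'
      · left; left; exact h'
      · right; right; linarith
  · rintro ((rfl | rfl) | (rfl | rfl)) <;>
      first
        | (rw [abs_of_nonneg (by linarith)]; ring)
        | (rw [abs_of_nonpos (by linarith)]; ring)
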